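/- arXiv:2010.14961 — 4 statements merged into one kernel-verified Lean document; each statement's English description precedes it below -/
import Mathlib

section
/- Let μ be a locally finite non-negative Borel measure on ℝ^d, x ∈ supp μ, β > 0, and suppose μ(B(x,r)) ≤ r^β for all r ≤ r₀. Suppose moreover that for some ε > 0 there is a sequence r_j → 0 with μ(B(x,r_j)) ≥ r_j^{β+ε}. Define h(t) = -log μ(B(x, e^{-t})) - (β + 2ε) t and let τ be a decrement moment of h⁻ (the running infimum of h). Then for every ρ > 1 and every decrement moment τ with τ ≥ log ρ, one has μ(B(x, ρ e^{-τ})) ≤ ρ^{β+2ε} μ(B(x, e^{-τ})), i.e. T_{x,e^{-τ}}[μ](B(0,ρ)) ≤ ρ^{β+2ε} μ(B(x, e^{-τ})). -/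
open MeasureTheory Metric Set Filter Topology

/-!
The profile `h t = -log μ(B(x, e^{-t})) - (β + 2ε) t` is lower semicontinuous: its first term is
nondecreasing and left-continuous, since `r ↦ μ(B(x, r))` is right-continuous (closed balls
decrease to the closed ball). Where `h τ` lies strictly above the running infimum, lower
semicontinuity keeps `h` above it on a whole neighbourhood of `τ`, which freezes the running
infimum there. Hence at a decrement moment `h τ ≤ h (τ - log ρ)`, and exponentiating this is the
estimate.
-/

theorem Monotone.lowerSemicontinuousAt_of_continuousWithinAt_Iic {α γ : Type*}
    [TopologicalSpace α] [LinearOrder α] [OrderTopology α]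
    [TopologicalSpace γ] [LinearOrder γ] [OrderTopology γ] {f : α → γ} (hf : Monotone f)
    {a : α} (hleft : ContinuousWithinAt f (Iic a) a) : LowerSemicontinuousAt f a := by
  intro y hy
  rw [← nhdsLE_sup_nhdsGE, eventually_sup]
  exact ⟨hleft.eventually (eventually_gt_nhds hy),
    eventually_nhdsWithin_of_forall fun _ hv => hy.trans_le (hf hv)⟩

section RunningInfimum

variable {f : ℝ → ℝ} {t₀ : ℝ}

noncomputable def runningInf (f : ℝ → ℝ) (t₀ t : ℝ) : ℝ := sInf (f '' Icc t₀ t)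

def IsDecrementMoment (f : ℝ → ℝ) (t₀ τ : ℝ) : Prop :=
  ¬ ∃ a b : ℝ, a < τ ∧ τ < b ∧ ∀ u ∈ Ioo a b ∩ Ici t₀, runningInf f t₀ u = runningInf f t₀ τ

theorem LowerSemicontinuous.bddBelow_image_Icc (hf : LowerSemicontinuous f) (a b : ℝ) :
    BddBelow (f '' Icc a b) :=
  hf.lowerSemicontinuousOn _ |>.bddBelow_of_isCompact isCompact_Icc

theorem runningInf_eq_of_le_on (hf : LowerSemicontinuous f) {u w c : ℝ} (hu : t₀ ≤ u)
    (huw : u ≤ w) (hc : ∀ v ∈ Icc u w, c ≤ f v)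
    (hlt : runningInf f t₀ u < c ∨ runningInf f t₀ w < c) :
    runningInf f t₀ w = runningInf f t₀ u := by
  have hright : c ≤ sInf (f '' Icc u w) :=
    le_csInf (nonempty_Icc.2 huw |>.image f) (by rintro _ ⟨v, hv, rfl⟩; exact hc v hv)
  have hsplit : min (runningInf f t₀ u) (sInf (f '' Icc u w)) ≤ runningInf f t₀ w := by
    unfold runningInf
    rw [← Icc_union_Icc_eq_Icc hu huw, image_union]
    exact le_csInf_union _ _
  have hmono : runningInf f t₀ w ≤ runningInf f t₀ u :=
    csInf_le_csInf (hf.bddBelow_image_Icc _ _) (nonempty_Icc.2 hu |>.image f)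
      (image_mono (Icc_subset_Icc_right huw))
  grind

theorem exists_Ioo_runningInf_eq_of_runningInf_lt (hf : LowerSemicontinuous f) {τ : ℝ}
    (hτ : t₀ ≤ τ) (hlt : runningInf f t₀ τ < f τ) :
    ∃ a b : ℝ, a < τ ∧ τ < b ∧ ∀ u ∈ Ioo a b ∩ Ici t₀, runningInf f t₀ u = runningInf f t₀ τ := by
  obtain ⟨c, hmc, hcf⟩ := exists_between hlt
  obtain ⟨a, b, ⟨ha, hb⟩, hab⟩ := mem_nhds_iff_exists_Ioo_subset.1 (hf τ c hcf)
  have hc : ∀ v ∈ Ioo a b, c ≤ f v := fun v hv => (hab hv).le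
  refine ⟨a, b, ha, hb, fun u ⟨⟨hau, hub⟩, hu⟩ => ?_⟩
  rcases le_total u τ with huτ | hτu
  · exact (runningInf_eq_of_le_on hf hu huτ
      (fun v hv => hc v ⟨hau.trans_le hv.1, hv.2.trans_lt hb⟩) (Or.inr hmc)).symm
  · exact runningInf_eq_of_le_on hf hτ hτu
      (fun v hv => hc v ⟨ha.trans_le hv.1, hv.2.trans_lt hub⟩) (Or.inl hmc)

theorem IsDecrementMoment.isMinOn (hf : LowerSemicontinuous f) {τ : ℝ} (hτ : t₀ ≤ τ)
    (hdec : IsDecrementMoment f t₀ τ) : IsMinOn f (Icc t₀ τ) τ := by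
  have hinf : runningInf f t₀ τ = f τ :=
    (csInf_le (hf.bddBelow_image_Icc _ _) ⟨τ, ⟨hτ, le_rfl⟩, rfl⟩).antisymm
      (not_lt.1 fun hlt => hdec (exists_Ioo_runningInf_eq_of_runningInf_lt hf hτ hlt))
  exact fun v hv => hinf ▸ csInf_le (hf.bddBelow_image_Icc _ _) ⟨v, hv, rfl⟩

end RunningInfimum

theorem le_rpow_mul_of_log_le {a b ρ c : ℝ} (ha : 0 < a) (hb : 0 < b) (hρ : 0 < ρ)
    (h : Real.log a ≤ c * Real.log ρ + Real.log b) : a ≤ ρ ^ c * b := by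
  rwa [← Real.log_le_log_iff ha (by positivity), Real.log_mul (by positivity) hb.ne',
    Real.log_rpow hρ]

section BallProfile

variable {α : Type*} [PseudoMetricSpace α] [ProperSpace α] [MeasurableSpace α]
  {μ : Measure α} [IsFiniteMeasureOnCompacts μ]

theorem continuousWithinAt_measure_closedBall_Ici [OpensMeasurableSpace α] (x : α) (r : ℝ) :
    ContinuousWithinAt (fun s => μ (closedBall x s)) (Ici r) r := by
  have h := tendsto_measure_biInter_gt (μ := μ) (s := closedBall x) (a := r)
    (fun _ _ => measurableSet_closedBall.nullMeasurableSet)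
    (fun _ _ _ hij => closedBall_subset_closedBall hij)
    ⟨r + 1, by linarith, measure_closedBall_lt_top.ne⟩
  rw [biInter_gt_closedBall] at h
  exact continuousWithinAt_Ioi_iff_Ici.1 h

theorem lowerSemicontinuous_neg_log_measure_closedBall_exp [OpensMeasurableSpace α] {x : α}
    (hx : ∀ r : ℝ, 0 < r → 0 < μ (closedBall x r)) :
    LowerSemicontinuous fun t => -Real.log (μ (closedBall x (Real.exp (-t)))).toReal := by
  have hpos : ∀ t : ℝ, 0 < (μ (closedBall x (Real.exp (-t)))).toReal := fun t =>
    ENNReal.toReal_pos (hx _ (Real.exp_pos _)).ne' measure_closedBall_lt_top.ne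
  have hmono : Monotone fun t => -Real.log (μ (closedBall x (Real.exp (-t)))).toReal :=
    fun t u htu => neg_le_neg <| Real.log_le_log (hpos u) <|
      ENNReal.toReal_mono measure_closedBall_lt_top.ne <| measure_mono <|
        closedBall_subset_closedBall <| Real.exp_le_exp.2 (neg_le_neg htu)
  refine fun τ => hmono.lowerSemicontinuousAt_of_continuousWithinAt_Iic ?_
  have hradius : ContinuousWithinAt (fun t => μ (closedBall x (Real.exp (-t)))) (Iic τ) τ :=
    (continuousWithinAt_measure_closedBall_Ici x _).comp (by fun_prop : Continuous
      fun t : ℝ => Real.exp (-t)).continuousWithinAt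
      fun t ht => Real.exp_le_exp.2 (neg_le_neg ht)
  exact (((Real.continuousAt_log (hpos τ).ne').tendsto.comp
    ((ENNReal.tendsto_toReal measure_closedBall_lt_top.ne).comp hradius))).neg

theorem measure_closedBall_mul_exp_le {x : α} (hx : ∀ r : ℝ, 0 < r → 0 < μ (closedBall x r))
    {c τ ρ : ℝ} (hρ : 0 < ρ)
    (hle : -Real.log (μ (closedBall x (Real.exp (-τ)))).toReal - c * τ ≤
      -Real.log (μ (closedBall x (Real.exp (-(τ - Real.log ρ))))).toReal
        - c * (τ - Real.log ρ)) :
    μ (closedBall x (ρ * Real.exp (-τ)))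
      ≤ ENNReal.ofReal (ρ ^ c) * μ (closedBall x (Real.exp (-τ))) := by
  have hradius : Real.exp (-(τ - Real.log ρ)) = ρ * Real.exp (-τ) := by
    rw [neg_sub, Real.exp_sub, Real.exp_log hρ, Real.exp_neg, div_eq_mul_inv]
  rw [hradius] at hle
  have hpos : ∀ r : ℝ, 0 < r → 0 < (μ (closedBall x r)).toReal := fun r hr =>
    ENNReal.toReal_pos (hx r hr).ne' measure_closedBall_lt_top.ne
  have hratio := le_rpow_mul_of_log_le (hpos (ρ * Real.exp (-τ)) (by positivity))
    (hpos _ (Real.exp_pos (-τ))) hρ (c := c) (by linarith)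
  rw [← ENNReal.ofReal_toReal measure_closedBall_lt_top.ne,
    ← ENNReal.ofReal_toReal (measure_closedBall_lt_top (x := x) (r := Real.exp (-τ))).ne,
    ← ENNReal.ofReal_mul (by positivity)]
  exact ENNReal.ofReal_le_ofReal hratio

end BallProfile

theorem blowup_estimate_at_decrement_moment_general
    (d : ℕ) (μ : Measure (EuclideanSpace ℝ (Fin d))) [IsLocallyFiniteMeasure μ]
    (x : EuclideanSpace ℝ (Fin d))
    (hx : ∀ r : ℝ, 0 < r → 0 < μ (closedBall x r))
    (β : ℝ) (ε : ℝ)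
    (r : ℕ → ℝ)
    (h hm : ℝ → ℝ)
    (hh : ∀ t : ℝ, h t =
      - Real.log (μ (closedBall x (Real.exp (-t)))).toReal - (β + 2 * ε) * t)
    (hhm : ∀ t : ℝ, 0 ≤ t → hm t = sInf (h '' Set.Icc 0 t))
    (τ : ℝ)
    (hdec : ¬ ∃ a b : ℝ, a < τ ∧ τ < b ∧
      ∀ u ∈ Set.Ioo a b ∩ Set.Ici (0:ℝ), hm u = hm τ)
    (ρ : ℝ) (hρ : 1 < ρ) (hρτ : Real.log ρ ≤ τ) :
    μ (closedBall x (ρ * Real.exp (-τ)))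
      ≤ ENNReal.ofReal (ρ ^ (β + 2 * ε)) * μ (closedBall x (Real.exp (-τ))) := by
  have hlogρ : 0 < Real.log ρ := Real.log_pos hρ
  have hτ : 0 ≤ τ := hlogρ.le.trans hρτ
  have hlsc : LowerSemicontinuous h := by
    rw [show h = _ from funext fun t => (hh t).trans (sub_eq_add_neg _ _)]
    exact (lowerSemicontinuous_neg_log_measure_closedBall_exp hx).add
      (by fun_prop : Continuous fun t : ℝ => -((β + 2 * ε) * t)).lowerSemicontinuous
  have hmin : IsMinOn h (Icc 0 τ) τ := by
    refine IsDecrementMoment.isMinOn hlsc hτ fun ⟨a, b, haτ, hτb, hconst⟩ =>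
      hdec ⟨a, b, haτ, hτb, fun u hu => ?_⟩
    rw [hhm u hu.2, hhm τ hτ]
    exact hconst u hu
  have hle := isMinOn_iff.1 hmin (τ - Real.log ρ) ⟨by linarith, by linarith⟩
  rw [hh, hh] at hle
  exact measure_closedBall_mul_exp_le hx (by linarith) hle

/-- The key blow-up estimate (2.13): under the assumptions of Proposition 2.2, with
`h(t) = -log μ(B(x,e^{-t})) - (β+2ε)t` and `h⁻` its running infimum, every decrement
moment `τ` with `τ ≥ log ρ`, `ρ > 1`, satisfies
`μ(B(x, ρ e^{-τ})) ≤ ρ^{β+2ε} μ(B(x, e^{-τ}))`. -/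
theorem blowup_estimate_at_decrement_moment
    (d : ℕ) (μ : Measure (EuclideanSpace ℝ (Fin d))) [IsLocallyFiniteMeasure μ]
    (x : EuclideanSpace ℝ (Fin d))
    (hx : ∀ r : ℝ, 0 < r → 0 < μ (closedBall x r))
    (β : ℝ) (hβ : 0 < β) (ε : ℝ) (hε : 0 < ε) (r₀ : ℝ) (hr₀ : 0 < r₀)
    (hup : ∀ r : ℝ, 0 < r → r ≤ r₀ → μ (closedBall x r) ≤ ENNReal.ofReal (r ^ β))
    (r : ℕ → ℝ) (hrpos : ∀ j, 0 < r j) (hrlim : Tendsto r atTop (𝓝 0))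
    (hlow : ∀ j, ENNReal.ofReal (r j ^ (β + ε)) ≤ μ (closedBall x (r j)))
    (h hm : ℝ → ℝ)
    (hh : ∀ t : ℝ, h t =
      - Real.log (μ (closedBall x (Real.exp (-t)))).toReal - (β + 2 * ε) * t)
    (hhm : ∀ t : ℝ, 0 ≤ t → hm t = sInf (h '' Set.Icc 0 t))
    (τ : ℝ) (hτ : 0 ≤ τ)
    (hdec : ¬ ∃ a b : ℝ, a < τ ∧ τ < b ∧
      ∀ u ∈ Set.Ioo a b ∩ Set.Ici (0:ℝ), hm u = hm τ)
    (ρ : ℝ) (hρ : 1 < ρ) (hρτ : Real.log ρ ≤ τ) :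
    μ (closedBall x (ρ * Real.exp (-τ)))
      ≤ ENNReal.ofReal (ρ ^ (β + 2 * ε)) * μ (closedBall x (Real.exp (-τ))) :=
  blowup_estimate_at_decrement_moment_general d μ x hx β ε r h hm hh hhm τ hdec ρ hρ hρτ
end

section
/- Let ν be a tempered (non-negative) Borel measure on ℝ^d whose Fourier transform (as a tempered distribution) is supported in the cone {ξ ∈ ℝ^d : Σ_{j=k+1}^d ξ_j² ≥ ε Σ_{j=1}^k ξ_j²} ∪ B(0,R) for some ε > 0, R > 0, 0 ≤ k ≤ d-1, and which decays at infinity: ν(ℝ^d \ B(0,R')) ≲_N (R')^{-N} for all N ∈ ℕ and R' > 1. Then the heat extension satisfies Heat[ν](0,t) ≲ t^{(k-d)/2} for t ∈ (0,1], where Heat[ν](x,t) = (4πt)^{-d/2} ∫ exp(-|x-y|²/(4t)) dν(y). -/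
/-!
Replacing `‖y‖` by the norm of the projection of `y` onto the first `k` coordinates only
enlarges the heat kernel. By the Fourier transform of the Gaussian, that projected kernel is
`(4πt)^{k/2} ∫_{ℝᵏ} e^{-4π²t|η|²} e^{-2πi⟨(η,0),y⟩} dη`, so by Fubini its integral against `ν` is
`(4πt)^{k/2} ∫_{ℝᵏ} e^{-4π²t|η|²} ν̂(η,0) dη`, where `ν̂(ξ) = charFun ν (-2πξ)`. The cone meets
`ℝᵏ × {0}` only at the origin, so `ν̂(η,0) = 0` for `|η| > R`, and `|ν̂| ≤ ν(ℝᵈ)` bounds the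
remaining integral by `ν(ℝᵈ) |B_R|`.
-/

open MeasureTheory Metric Set Filter Real

open scoped RealInnerProductSpace Complex

theorem integrable_exp_neg_sq_norm_comp_div {α F : Type*} [MeasurableSpace α]
    [NormedAddCommGroup F] (ν : Measure α) [IsFiniteMeasure ν] {f : α → F}
    (hf : AEStronglyMeasurable f ν) {t : ℝ} (ht : 0 ≤ t) :
    Integrable (fun y => rexp (-‖f y‖ ^ 2 / (4 * t))) ν := by
  refine Integrable.of_bound (by fun_prop) 1 (Eventually.of_forall fun y => ?_)
  rw [norm_of_nonneg (exp_nonneg _), exp_le_one_iff, neg_div]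
  exact neg_nonpos.2 (by positivity)

theorem charFun_neg_two_pi_smul {E : Type*} [NormedAddCommGroup E] [InnerProductSpace ℝ E]
    [MeasurableSpace E] (ν : Measure E) (ξ : E) :
    charFun ν (-(2 * π) • ξ) =
      ∫ y, cexp (-(2 * π * ⟪ξ, y⟫ : ℝ) * Complex.I) ∂ν := by
  simp only [charFun_apply, inner_smul_right, real_inner_comm ξ, neg_mul, Complex.ofReal_neg]

section HeatKernel

variable {E V : Type*} [NormedAddCommGroup V] [InnerProductSpace ℝ V] [FiniteDimensional ℝ V]
  [NormedAddCommGroup E] [InnerProductSpace ℝ E] [FiniteDimensional ℝ E]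

theorem LinearIsometry.norm_adjoint_apply_le (J : V →ₗᵢ[ℝ] E) (y : E) :
    ‖J.toContinuousLinearMap.adjoint y‖ ≤ ‖y‖ := by
  refine (ContinuousLinearMap.le_opNorm _ y).trans (mul_le_of_le_one_left (norm_nonneg y) ?_)
  rw [LinearIsometryEquiv.norm_map]
  exact J.norm_toContinuousLinearMap_le

variable [MeasurableSpace V] [BorelSpace V]

theorem exp_neg_sq_norm_div_eq_integral {t : ℝ} (ht : 0 < t) (x : V) :
    (rexp (-‖x‖ ^ 2 / (4 * t)) : ℂ) =
      ((4 * π * t) ^ (Module.finrank ℝ V / 2 : ℝ) : ℝ) *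
        ∫ η : V, cexp (-(4 * π ^ 2 * t * ‖η‖ ^ 2 : ℝ)) *
          cexp ((-(2 * π) * ⟪x, η⟫ : ℝ) * Complex.I) := by
  have hb : 0 < ((4 * π ^ 2 * t : ℝ) : ℂ).re := by rw [Complex.ofReal_re]; positivity
  have hexp : ∀ η : V, cexp (-(4 * π ^ 2 * t * ‖η‖ ^ 2 : ℝ)) *
      cexp ((-(2 * π) * ⟪x, η⟫ : ℝ) * Complex.I) =
      cexp (-((4 * π ^ 2 * t : ℝ) : ℂ) * ‖η‖ ^ 2 + -(2 * π) * Complex.I * ⟪x, η⟫) := by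
    intro η; rw [← Complex.exp_add]; push_cast; ring_nf
  have hbase : (π : ℂ) / ((4 * π ^ 2 * t : ℝ) : ℂ) = (((4 * π * t)⁻¹ : ℝ) : ℂ) := by
    have := pi_ne_zero; have := ht.ne'
    push_cast; field_simp
  have hexponent : (-(2 * π) * Complex.I) ^ 2 * (‖x‖ : ℂ) ^ 2 / (4 * ((4 * π ^ 2 * t : ℝ) : ℂ)) =
      ((-‖x‖ ^ 2 / (4 * t) : ℝ) : ℂ) := by
    have := pi_ne_zero; have := ht.ne'
    push_cast; field_simp; rw [Complex.I_sq]; ring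
  have hpos : 0 < 4 * π * t := by positivity
  simp_rw [hexp]
  rw [GaussianFourier.integral_cexp_neg_mul_sq_norm_add hb, hbase, hexponent,
    show ((Module.finrank ℝ V : ℂ) / 2) = ((Module.finrank ℝ V / 2 : ℝ) : ℂ) by push_cast; rfl,
    ← Complex.ofReal_cpow (by positivity), ← Complex.ofReal_exp, ← mul_assoc,
    ← Complex.ofReal_mul, inv_rpow hpos.le, mul_inv_cancel₀ (rpow_pos_of_pos hpos _).ne',
    Complex.ofReal_one, one_mul]

variable [MeasurableSpace E] [BorelSpace E]

theorem integral_exp_neg_sq_norm_adjoint_eq (ν : Measure E) [IsFiniteMeasure ν]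
    (J : V →L[ℝ] E) {t : ℝ} (ht : 0 < t) :
    ((∫ y, rexp (-‖J.adjoint y‖ ^ 2 / (4 * t)) ∂ν : ℝ) : ℂ) =
      ((4 * π * t) ^ (Module.finrank ℝ V / 2 : ℝ) : ℝ) *
        ∫ η : V, cexp (-(4 * π ^ 2 * t * ‖η‖ ^ 2 : ℝ)) * charFun ν (-(2 * π) • J η) := by
  set G : E → V → ℂ := fun y η => cexp (-(4 * π ^ 2 * t * ‖η‖ ^ 2 : ℝ)) *
    cexp ((-(2 * π) * ⟪J.adjoint y, η⟫ : ℝ) * Complex.I)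
  have hgauss : Integrable (fun η : V => cexp (-(4 * π ^ 2 * t * ‖η‖ ^ 2 : ℝ))) := by
    have hb : 0 < ((4 * π ^ 2 * t : ℝ) : ℂ).re := by rw [Complex.ofReal_re]; positivity
    simpa using GaussianFourier.integrable_cexp_neg_mul_sq_norm_add hb 0 (0 : V)
  have hG : Integrable (Function.uncurry G) (ν.prod volume) :=
    (hgauss.comp_snd ν).mul_bdd (c := 1) (Continuous.aestronglyMeasurable (by fun_prop))
      (Eventually.of_forall fun _ => (Complex.norm_exp_ofReal_mul_I _).le)
  calc ((∫ y, rexp (-‖J.adjoint y‖ ^ 2 / (4 * t)) ∂ν : ℝ) : ℂ)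
      = ∫ y, ((4 * π * t) ^ (Module.finrank ℝ V / 2 : ℝ) : ℝ) * (∫ η, G y η) ∂ν := by
        rw [← integral_complex_ofReal]
        simp_rw [exp_neg_sq_norm_div_eq_integral ht]
        rfl
    _ = ((4 * π * t) ^ (Module.finrank ℝ V / 2 : ℝ) : ℝ) * ∫ η, ∫ y, G y η ∂ν := by
        rw [integral_const_mul, integral_integral_swap hG]
    _ = _ := by
        congr 1
        refine integral_congr_ae (Eventually.of_forall fun η => ?_)
        simp only [G, integral_const_mul, charFun_apply, inner_smul_right,
          ContinuousLinearMap.adjoint_inner_left]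

theorem integral_exp_neg_sq_norm_le_of_charFun_eq_zero (ν : Measure E) [IsFiniteMeasure ν]
    (J : V →ₗᵢ[ℝ] E) {R t : ℝ} (ht : 0 < t)
    (hvanish : ∀ η : V, R < ‖η‖ → charFun ν (-(2 * π) • J η) = 0) :
    ∫ y, rexp (-‖y‖ ^ 2 / (4 * t)) ∂ν ≤
      (4 * π * t) ^ (Module.finrank ℝ V / 2 : ℝ) *
        (ν.real univ * volume.real (closedBall (0 : V) R)) := by
  set A := J.toContinuousLinearMap.adjoint
  have hweight : ∀ η : V,
      ‖cexp (-(4 * π ^ 2 * t * ‖η‖ ^ 2 : ℝ)) * charFun ν (-(2 * π) • J η)‖ ≤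
        (closedBall 0 R).indicator (fun _ => ν.real univ) η := by
    intro η
    by_cases hη : η ∈ closedBall (0 : V) R
    · rw [indicator_of_mem hη, norm_mul, ← Complex.ofReal_neg, Complex.norm_exp_ofReal]
      refine (mul_le_of_le_one_left (norm_nonneg _) ?_).trans (norm_charFun_le _)
      exact exp_le_one_iff.2 (neg_nonpos.2 (by positivity))
    · rw [mem_closedBall, dist_zero_right, not_le] at hη
      rw [hvanish η hη, mul_zero, norm_zero]
      exact indicator_nonneg (fun _ _ => measureReal_nonneg) η
  calc ∫ y, rexp (-‖y‖ ^ 2 / (4 * t)) ∂ν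
      ≤ ∫ y, rexp (-‖A y‖ ^ 2 / (4 * t)) ∂ν := by
        refine integral_mono (integrable_exp_neg_sq_norm_comp_div ν (by fun_prop) ht.le)
          (integrable_exp_neg_sq_norm_comp_div ν (by fun_prop) ht.le) fun y => ?_
        gcongr
        exact J.norm_adjoint_apply_le y
    _ = ‖((∫ y, rexp (-‖A y‖ ^ 2 / (4 * t)) ∂ν : ℝ) : ℂ)‖ := by
        rw [Complex.norm_real, norm_of_nonneg (integral_nonneg fun y => (exp_pos _).le)]
    _ = (4 * π * t) ^ (Module.finrank ℝ V / 2 : ℝ) *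
          ‖∫ η : V, cexp (-(4 * π ^ 2 * t * ‖η‖ ^ 2 : ℝ)) * charFun ν (-(2 * π) • J η)‖ := by
        rw [integral_exp_neg_sq_norm_adjoint_eq ν _ ht, norm_mul, Complex.norm_real,
          norm_of_nonneg (by positivity)]
        rfl
    _ ≤ (4 * π * t) ^ (Module.finrank ℝ V / 2 : ℝ) *
          ∫ η, (closedBall (0 : V) R).indicator (fun _ => ν.real univ) η := by
        gcongr
        refine norm_integral_le_of_norm_le ?_ (Eventually.of_forall hweight)
        exact (integrableOn_const measure_closedBall_lt_top.ne).integrable_indicator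
          measurableSet_closedBall
    _ = _ := by
        rw [integral_indicator_const _ measurableSet_closedBall, smul_eq_mul]
        ring

end HeatKernel

namespace EuclideanSpace

variable {k d : ℕ}

noncomputable def zeroExtend (h : k ≤ d) :
    EuclideanSpace ℝ (Fin k) →ₗᵢ[ℝ] EuclideanSpace ℝ (Fin d) where
  toFun η := WithLp.toLp 2 fun j => if hj : (j : ℕ) < k then η ⟨j, hj⟩ else 0
  map_add' η ζ := by ext j; by_cases hj : (j : ℕ) < k <;> simp [hj]
  map_smul' c η := by ext j; by_cases hj : (j : ℕ) < k <;> simp [hj]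
  norm_map' η := by
    rw [← sq_eq_sq₀ (norm_nonneg _) (norm_nonneg _), real_norm_sq_eq, real_norm_sq_eq]
    obtain ⟨m, rfl⟩ := Nat.exists_eq_add_of_le h
    simp [Fin.sum_univ_add]

theorem zeroExtend_apply_of_le (h : k ≤ d) (η : EuclideanSpace ℝ (Fin k)) {j : Fin d}
    (hj : k ≤ j) : zeroExtend h η j = 0 :=
  dif_neg hj.not_gt

theorem zeroExtend_notMem_cone_union_closedBall (h : k ≤ d) {ε R : ℝ} (hε : 0 < ε)
    (hR : 0 ≤ R) {η : EuclideanSpace ℝ (Fin k)} (hη : R < ‖η‖) :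
    zeroExtend h η ∉ {ξ : EuclideanSpace ℝ (Fin d) |
        ε * ∑ j : Fin d, (if (j : ℕ) < k then (ξ j) ^ 2 else 0) ≤
          ∑ j : Fin d, (if (j : ℕ) < k then 0 else (ξ j) ^ 2)} ∪ closedBall 0 R := by
  have hlow : ∑ j : Fin d, (if (j : ℕ) < k then (zeroExtend h η j) ^ 2 else 0) = ‖η‖ ^ 2 := by
    rw [← (zeroExtend h).norm_map η, real_norm_sq_eq]
    refine Finset.sum_congr rfl fun j _ => ?_
    split_ifs with hj
    · rfl
    · rw [zeroExtend_apply_of_le h η (not_lt.1 hj), sq, zero_mul]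
  have hhigh : ∑ j : Fin d, (if (j : ℕ) < k then 0 else (zeroExtend h η j) ^ 2) = 0 := by
    refine Finset.sum_eq_zero fun j _ => ?_
    split_ifs with hj
    · rfl
    · rw [zeroExtend_apply_of_le h η (not_lt.1 hj), sq, zero_mul]
  rintro (hcone | hball)
  · rw [mem_ofPred_eq, hlow, hhigh] at hcone
    exact hcone.not_gt (by have := hR.trans_lt hη; positivity)
  · rw [mem_closedBall, dist_zero_right, (zeroExtend h).norm_map] at hball
    exact hball.not_gt hη

end EuclideanSpace

theorem heat_extension_bound_spectral_cone_general
    (d k : ℕ) (hk : k + 1 ≤ d)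
    (ν : Measure (EuclideanSpace ℝ (Fin d))) [IsFiniteMeasure ν]
    (ε R : ℝ) (hε : 0 < ε) (hR : 0 < R)
    (hspec : tsupport (fun ξ : EuclideanSpace ℝ (Fin d) =>
        ∫ y, Complex.exp (-(2 * π * (inner ℝ ξ y : ℝ) : ℝ) * Complex.I) ∂ν) ⊆
      {ξ : EuclideanSpace ℝ (Fin d) |
          ε * ∑ j : Fin d, (if (j : ℕ) < k then (ξ j) ^ 2 else 0) ≤
            ∑ j : Fin d, (if (j : ℕ) < k then 0 else (ξ j) ^ 2)} ∪
        closedBall 0 R) :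
    ∃ C : ℝ, 0 < C ∧ ∀ t : ℝ, 0 < t → t ≤ 1 →
      (4 * π * t) ^ (-(d : ℝ) / 2) *
          ∫ y, Real.exp (-‖y‖ ^ 2 / (4 * t)) ∂ν ≤
        C * t ^ (((k : ℝ) - d) / 2) := by
  have hkd : k ≤ d := k.le_succ.trans hk
  rw [← funext (charFun_neg_two_pi_smul ν)] at hspec
  have hvanish : ∀ η, R < ‖η‖ → charFun ν (-(2 * π) • EuclideanSpace.zeroExtend hkd η) = 0 :=
    fun η hη => image_eq_zero_of_notMem_tsupport (f := fun ξ => charFun ν (-(2 * π) • ξ)) fun hmem =>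
        EuclideanSpace.zeroExtend_notMem_cone_union_closedBall hkd hε hR.le hη (hspec hmem)
  set K := ν.real univ * volume.real (closedBall (0 : EuclideanSpace ℝ (Fin k)) R)
  refine ⟨(4 * π) ^ (((k : ℝ) - d) / 2) * K + 1, by positivity, fun t ht _ => ?_⟩
  have hbound := integral_exp_neg_sq_norm_le_of_charFun_eq_zero ν _ ht hvanish
  rw [finrank_euclideanSpace_fin] at hbound
  have hpos : 0 < 4 * π * t := by positivity
  calc (4 * π * t) ^ (-(d : ℝ) / 2) * ∫ y, rexp (-‖y‖ ^ 2 / (4 * t)) ∂ν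
      ≤ (4 * π * t) ^ (-(d : ℝ) / 2) * ((4 * π * t) ^ ((k : ℝ) / 2) * K) := by gcongr
    _ = (4 * π) ^ (((k : ℝ) - d) / 2) * K * t ^ (((k : ℝ) - d) / 2) := by
        rw [← mul_assoc, ← rpow_add hpos, mul_rpow (by positivity) ht.le]
        ring_nf
    _ ≤ _ := by gcongr; linarith

/-- Core estimate of Theorem 1.6: if a rapidly decaying measure `ν` on `ℝᵈ` has Fourier
transform supported in the cone `{Σ_{j≥k} ξ_j² ≥ ε Σ_{j<k} ξ_j²} ∪ B(0,R)`, then its heat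
extension satisfies `Heat[ν](0,t) ≲ t^{(k-d)/2}` for `t ∈ (0,1]`. -/
theorem heat_extension_bound_spectral_cone
    (d k : ℕ) (hk : k + 1 ≤ d)
    (ν : Measure (EuclideanSpace ℝ (Fin d))) [IsFiniteMeasure ν]
    (hdecay : ∀ N : ℕ, ∃ C : ℝ, 0 < C ∧ ∀ R : ℝ, 1 < R →
      ν {y | R < ‖y‖} ≤ ENNReal.ofReal (C * R ^ (-(N : ℝ))))
    (ε R : ℝ) (hε : 0 < ε) (hR : 0 < R)
    (hspec : tsupport (fun ξ : EuclideanSpace ℝ (Fin d) =>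
        ∫ y, Complex.exp (-(2 * π * (inner ℝ ξ y : ℝ) : ℝ) * Complex.I) ∂ν) ⊆
      {ξ : EuclideanSpace ℝ (Fin d) |
          ε * ∑ j : Fin d, (if (j : ℕ) < k then (ξ j) ^ 2 else 0) ≤
            ∑ j : Fin d, (if (j : ℕ) < k then 0 else (ξ j) ^ 2)} ∪
        closedBall 0 R) :
    ∃ C : ℝ, 0 < C ∧ ∀ t : ℝ, 0 < t → t ≤ 1 →
      (4 * π * t) ^ (-(d : ℝ) / 2) *
          ∫ y, Real.exp (-‖y‖ ^ 2 / (4 * t)) ∂ν ≤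
        C * t ^ (((k : ℝ) - d) / 2) :=
  heat_extension_bound_spectral_cone_general d k hk ν ε R hε hR hspec
end

section
/- Let ν be a tempered measure on ℝ^d satisfying ν(ℝ^d \ B(0,R)) ≲_N R^{-N} for all N and R > 1, whose Fourier transform \hat{ν} is a smooth function supported in {ξ : Σ_{j=k+1}^d ξ_j² ≥ ε Σ_{j=1}^k ξ_j²} ∪ B(0,R₀). For t > 0, define a distribution ν_t on ℝ^{d-k} by \hat{ν}_t(ξ_{k+1},…,ξ_d) = ∫_{ℝ^k} \hat{ν}(ξ) e^{-4π² t Σ_{j=1}^k ξ_j²} dξ_1…dξ_k. Then ν_t is a non-negative distribution, hence a tempered measure, and since \hat{ν}_t is continuous at 0, ν_t is a finite measure on ℝ^{d-k}. -/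
open MeasureTheory Metric Set Filter Topology Real
open scoped ENNReal NNReal

section Aux
open FourierTransform

variable {k m : ℕ}

private noncomputable def pA (k m : ℕ) (y : EuclideanSpace ℝ (Fin (k + m))) :
    EuclideanSpace ℝ (Fin k) :=
  WithLp.toLp 2 (fun i => y (Fin.castAdd m i))

private noncomputable def pB (k m : ℕ) (y : EuclideanSpace ℝ (Fin (k + m))) :
    EuclideanSpace ℝ (Fin m) :=
  WithLp.toLp 2 (fun i => y (Fin.natAdd k i))

private lemma continuous_pA : Continuous (pA k m) := by
  exact (PiLp.continuous_toLp 2 (fun _ : Fin k => ℝ)).comp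
    ((continuous_pi fun i => continuous_apply (Fin.castAdd m i)).comp
      (PiLp.continuous_ofLp 2 (fun _ : Fin (k + m) => ℝ)))

private lemma continuous_pB : Continuous (pB k m) := by
  exact (PiLp.continuous_toLp 2 (fun _ : Fin m => ℝ)).comp
    ((continuous_pi fun i => continuous_apply (Fin.natAdd k i)).comp
      (PiLp.continuous_ofLp 2 (fun _ : Fin (k + m) => ℝ)))

private noncomputable def emb (k m : ℕ) (a : EuclideanSpace ℝ (Fin k))
    (b : EuclideanSpace ℝ (Fin m)) : EuclideanSpace ℝ (Fin (k + m)) :=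
  (WithLp.equiv 2 (Fin (k + m) → ℝ)).symm (Fin.addCases (fun i => a i) (fun i => b i))

private lemma continuous_emb (b : EuclideanSpace ℝ (Fin m)) :
    Continuous (fun a : EuclideanSpace ℝ (Fin k) => emb k m a b) := by
  apply (PiLp.continuous_toLp 2 (fun _ : Fin (k + m) => ℝ)).comp
  apply continuous_pi
  intro j
  induction j using Fin.addCases with
  | left i => simpa using PiLp.continuous_apply 2 (fun _ : Fin k => ℝ) i
  | right i => simpa using continuous_const

private lemma inner_split (a : EuclideanSpace ℝ (Fin k)) (b : EuclideanSpace ℝ (Fin m))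
    (y : EuclideanSpace ℝ (Fin (k + m))) :
    (inner ℝ (emb k m a b) y : ℝ) = inner ℝ a (pA k m y) + inner ℝ b (pB k m y) := by
  simp only [PiLp.inner_apply, RCLike.inner_apply, conj_trivial, pA, pB, emb]
  rw [Fin.sum_univ_add]
  congr 1 <;> (apply Finset.sum_congr rfl; intro i _) <;>
    simp

end Aux

open FourierTransform in
/-- Construction of the partially heat-regularized projected measure `ν_t` (proof of
Theorem 1.6): if `ν` is a rapidly decaying measure on `ℝ^{k+m}` whose Fourier transform
`ν̂` is smooth and supported in `{Σ_{j≥k} ξ_j² ≥ ε Σ_{j<k} ξ_j²} ∪ B(0,R₀)`, then for each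
`t > 0` the distribution `ν_t` on `ℝ^m` defined by
`ν̂_t(b) = ∫_{ℝᵏ} ν̂(a,b) e^{-4π²t|a|²} da` is a non-negative finite measure; i.e. there
is a finite measure `σ` on `ℝ^m` whose Fourier transform equals `ν̂_t`. -/
theorem projected_heat_measure_exists
    (k m : ℕ) (hm : 0 < m)
    (ν : Measure (EuclideanSpace ℝ (Fin (k + m)))) [IsFiniteMeasure ν]
    (hdecay : ∀ N : ℕ, ∃ C : ℝ, 0 < C ∧ ∀ R : ℝ, 1 < R →
      ν {y | R < ‖y‖} ≤ ENNReal.ofReal (C * R ^ (-(N : ℝ))))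
    (F : EuclideanSpace ℝ (Fin (k + m)) → ℂ)
    (hF : ∀ ξ, F ξ = ∫ y, Complex.exp (-(2 * π * (inner ℝ ξ y : ℝ) : ℝ) * Complex.I) ∂ν)
    (hFsmooth : ContDiff ℝ (⊤ : ℕ∞) F)
    (ε R₀ : ℝ) (hε : 0 < ε) (hR₀ : 0 < R₀)
    (hsupp : tsupport F ⊆
      {ξ : EuclideanSpace ℝ (Fin (k + m)) |
          ε * ∑ j : Fin (k + m), (if (j : ℕ) < k then (ξ j) ^ 2 else 0) ≤
            ∑ j : Fin (k + m), (if (j : ℕ) < k then 0 else (ξ j) ^ 2)} ∪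
        closedBall 0 R₀) :
    ∀ t : ℝ, 0 < t →
      ∃ σ : Measure (EuclideanSpace ℝ (Fin m)), IsFiniteMeasure σ ∧
        ∀ b : EuclideanSpace ℝ (Fin m),
          (∫ y, Complex.exp (-(2 * π * (inner ℝ b y : ℝ) : ℝ) * Complex.I) ∂σ) =
            ∫ a : EuclideanSpace ℝ (Fin k),
              F ((WithLp.equiv 2 (Fin (k + m) → ℝ)).symm
                  (Fin.addCases (fun i => a i) (fun i => b i))) *
                (Real.exp (-(4 * π ^ 2 * t * ‖a‖ ^ 2)) : ℂ) := by
  intro t ht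
  obtain ⟨c, hc_def⟩ : ∃ c : ℝ, c = 4 * π ^ 2 * t := ⟨_, rfl⟩
  have hc : 0 < c := by rw [hc_def]; positivity
  obtain ⟨g, hg_def⟩ : ∃ g : EuclideanSpace ℝ (Fin k) → ℝ,
      g = fun x => (π / c) ^ ((k : ℝ) / 2) * rexp (-(π ^ 2) * ‖x‖ ^ 2 / c) := ⟨_, rfl⟩
  have hg_pos : ∀ x, 0 < g x := by
    intro x; simp only [hg_def]; positivity
  have hg_bd : ∀ x, g x ≤ (π / c) ^ ((k : ℝ) / 2) := by
    intro x
    simp only [hg_def]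
    have h1 : rexp (-(π ^ 2) * ‖x‖ ^ 2 / c) ≤ 1 := by
      apply Real.exp_le_one_iff.2
      rw [neg_mul, neg_div, neg_nonpos]
      positivity
    calc (π / c) ^ ((k : ℝ) / 2) * rexp (-(π ^ 2) * ‖x‖ ^ 2 / c)
        ≤ (π / c) ^ ((k : ℝ) / 2) * 1 := by
          apply mul_le_mul_of_nonneg_left h1 (by positivity)
      _ = _ := mul_one _
  have hg_cont : Continuous g := by
    rw [hg_def]
    apply continuous_const.mul
    exact Real.continuous_exp.comp (by fun_prop)
  -- Fourier transform of the Gaussian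
  have hπc : (0 : ℝ) ≤ π / c := by positivity
  have hgauss : ∀ x : EuclideanSpace ℝ (Fin k),
      (∫ a : EuclideanSpace ℝ (Fin k),
        Complex.exp ((↑(-2 * π * (inner ℝ a x : ℝ)) * Complex.I)) *
          Complex.exp (-(c : ℂ) * (‖a‖ : ℂ) ^ 2)) = ((g x : ℝ) : ℂ) := by
    intro x
    have hb : (0 : ℝ) < ((c : ℂ)).re := by simpa using hc
    have h := fourier_gaussian_innerProductSpace (V := EuclideanSpace ℝ (Fin k))
      (b := (c : ℂ)) hb x
    rw [Real.fourier_eq'] at h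
    simp only [smul_eq_mul] at h
    have hgc : ((g x : ℝ) : ℂ) =
        ((π / c : ℝ) : ℂ) ^ ((((k : ℝ) / 2 : ℝ)) : ℂ) *
          Complex.exp (((-(π ^ 2) * ‖x‖ ^ 2 / c : ℝ)) : ℂ) := by
      simp only [hg_def]
      rw [Complex.ofReal_mul, Complex.ofReal_cpow hπc, Complex.ofReal_exp]
    rw [h, finrank_euclideanSpace_fin, hgc]
    congr 1
    · congr 1
      · push_cast; ring
      · push_cast; ring
    · congr 1
      push_cast; ring
  -- the measure
  have hρ_meas : Measurable fun y : EuclideanSpace ℝ (Fin (k + m)) =>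
      (g (pA k m y)).toNNReal :=
    measurable_real_toNNReal.comp (hg_cont.measurable.comp continuous_pA.measurable)
  haveI hμ'fin : IsFiniteMeasure
      (ν.withDensity fun y => (((g (pA k m y)).toNNReal : ℝ≥0) : ℝ≥0∞)) := by
    constructor
    rw [withDensity_apply _ MeasurableSet.univ, setLIntegral_univ]
    calc ∫⁻ y, (((g (pA k m y)).toNNReal : ℝ≥0) : ℝ≥0∞) ∂ν
        ≤ ∫⁻ _, ENNReal.ofReal ((π / c) ^ ((k : ℝ) / 2)) ∂ν := by
          apply lintegral_mono
          intro y
          exact ENNReal.ofReal_le_ofReal (hg_bd _)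
      _ = ENNReal.ofReal ((π / c) ^ ((k : ℝ) / 2)) * ν univ := lintegral_const _
      _ < ⊤ := ENNReal.mul_lt_top ENNReal.ofReal_lt_top (measure_lt_top ν univ)
  refine ⟨(ν.withDensity fun y => (((g (pA k m y)).toNNReal : ℝ≥0) : ℝ≥0∞)).map (pB k m),
    Measure.isFiniteMeasure_map _ _, ?_⟩
  intro b
  -- continuity of the character
  have hcontB : Continuous fun z : EuclideanSpace ℝ (Fin m) =>
      Complex.exp (-(2 * π * (inner ℝ b z : ℝ) : ℝ) * Complex.I) := by
    apply Complex.continuous_exp.comp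
    apply Continuous.mul _ continuous_const
    apply Continuous.neg
    apply Complex.continuous_ofReal.comp
    exact continuous_const.mul (Continuous.inner continuous_const continuous_id)
  rw [integral_map continuous_pB.measurable.aemeasurable hcontB.aestronglyMeasurable]
  rw [integral_withDensity_eq_integral_smul hρ_meas]
  have hsm : ∀ y : EuclideanSpace ℝ (Fin (k + m)),
      (g (pA k m y)).toNNReal •
          Complex.exp (-(2 * π * (inner ℝ b (pB k m y) : ℝ) : ℝ) * Complex.I)
        = ((g (pA k m y) : ℝ) : ℂ) *
          Complex.exp (-(2 * π * (inner ℝ b (pB k m y) : ℝ) : ℝ) * Complex.I) := by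
    intro y
    rw [NNReal.smul_def, Real.coe_toNNReal _ (hg_pos _).le, Complex.real_smul]
  simp only [hsm]
  -- now compute the right-hand side
  have hexp_c : ∀ a : EuclideanSpace ℝ (Fin k),
      (Real.exp (-(4 * π ^ 2 * t * ‖a‖ ^ 2)) : ℂ) =
        Complex.exp (-(c : ℂ) * (‖a‖ : ℂ) ^ 2) := by
    intro a
    rw [Complex.ofReal_exp]
    congr 1
    rw [hc_def]; push_cast; ring
  have hgauss_int : Integrable
      (fun a : EuclideanSpace ℝ (Fin k) => Complex.exp (-(c : ℂ) * (‖a‖ : ℂ) ^ 2)) := by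
    have hb : (0 : ℝ) < ((c : ℂ)).re := by simpa using hc
    have := GaussianFourier.integrable_cexp_neg_mul_sq_norm_add (V := EuclideanSpace ℝ (Fin k)) hb 0 0
    simpa using this
  -- continuity of the full integrand on the product space
  have hcont_u : Continuous (fun p : EuclideanSpace ℝ (Fin k) × EuclideanSpace ℝ (Fin (k + m)) =>
      Complex.exp (-(2 * π * (inner ℝ (emb k m p.1 b) p.2 : ℝ) : ℝ) * Complex.I) *
        Complex.exp (-(c : ℂ) * (‖p.1‖ : ℂ) ^ 2)) := by
    apply Continuous.mul
    · apply Complex.continuous_exp.comp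
      apply Continuous.mul _ continuous_const
      apply Continuous.neg
      apply Complex.continuous_ofReal.comp
      exact continuous_const.mul
        (Continuous.inner ((continuous_emb b).comp continuous_fst) continuous_snd)
    · apply Complex.continuous_exp.comp
      exact continuous_const.mul
        ((Complex.continuous_ofReal.comp (continuous_norm.comp continuous_fst)).pow 2)
  have hint : Integrable
      (Function.uncurry fun (a : EuclideanSpace ℝ (Fin k))
          (y : EuclideanSpace ℝ (Fin (k + m))) =>
        Complex.exp (-(2 * π * (inner ℝ (emb k m a b) y : ℝ) : ℝ) * Complex.I) *
          Complex.exp (-(c : ℂ) * (‖a‖ : ℂ) ^ 2))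
      ((volume : Measure (EuclideanSpace ℝ (Fin k))).prod ν) := by
    have hB : Integrable
        (fun p : EuclideanSpace ℝ (Fin k) × EuclideanSpace ℝ (Fin (k + m)) =>
          ‖Complex.exp (-(c : ℂ) * (‖p.1‖ : ℂ) ^ 2)‖)
        ((volume : Measure (EuclideanSpace ℝ (Fin k))).prod ν) := by
      simpa [mul_one] using hgauss_int.norm.mul_prod (integrable_const (1 : ℝ))
    apply hB.mono' hcont_u.aestronglyMeasurable
    filter_upwards with p
    rw [norm_mul]
    have h1 : ‖Complex.exp (-(2 * π * (inner ℝ (emb k m p.1 b) p.2 : ℝ) : ℝ) * Complex.I)‖ = 1 := by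
      rw [show (-(2 * π * (inner ℝ (emb k m p.1 b) p.2 : ℝ) : ℝ) : ℂ) * Complex.I
        = ((-(2 * π * (inner ℝ (emb k m p.1 b) p.2 : ℝ)) : ℝ) : ℂ) * Complex.I by push_cast; ring]
      exact Complex.norm_exp_ofReal_mul_I _
    rw [h1, one_mul]
  -- evaluate the inner ℝ integral for fixed y
  have hinner : ∀ y : EuclideanSpace ℝ (Fin (k + m)),
      (∫ a : EuclideanSpace ℝ (Fin k),
        Complex.exp (-(2 * π * (inner ℝ (emb k m a b) y : ℝ) : ℝ) * Complex.I) *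
          Complex.exp (-(c : ℂ) * (‖a‖ : ℂ) ^ 2))
        = ((g (pA k m y) : ℝ) : ℂ) *
          Complex.exp (-(2 * π * (inner ℝ b (pB k m y) : ℝ) : ℝ) * Complex.I) := by
    intro y
    have hpt : ∀ a : EuclideanSpace ℝ (Fin k),
        Complex.exp (-(2 * π * (inner ℝ (emb k m a b) y : ℝ) : ℝ) * Complex.I) *
            Complex.exp (-(c : ℂ) * (‖a‖ : ℂ) ^ 2)
          = Complex.exp (-(2 * π * (inner ℝ b (pB k m y) : ℝ) : ℝ) * Complex.I) *
            (Complex.exp ((↑(-2 * π * (inner ℝ a (pA k m y) : ℝ)) * Complex.I)) *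
              Complex.exp (-(c : ℂ) * (‖a‖ : ℂ) ^ 2)) := by
      intro a
      rw [inner_split]
      rw [show (-(2 * π * ((inner ℝ a (pA k m y) : ℝ) + (inner ℝ b (pB k m y) : ℝ)) : ℝ) : ℂ) *
            Complex.I
          = -(2 * π * (inner ℝ b (pB k m y) : ℝ) : ℝ) * Complex.I +
            (↑(-2 * π * (inner ℝ a (pA k m y) : ℝ)) * Complex.I) by push_cast; ring]
      rw [Complex.exp_add]
      ring
    simp only [hpt]
    rw [integral_const_mul, hgauss (pA k m y)]
    ring
  -- put everything together
  calc ∫ y, ((g (pA k m y) : ℝ) : ℂ) *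
        Complex.exp (-(2 * π * (inner ℝ b (pB k m y) : ℝ) : ℝ) * Complex.I) ∂ν
      = ∫ y, ∫ a : EuclideanSpace ℝ (Fin k),
          Complex.exp (-(2 * π * (inner ℝ (emb k m a b) y : ℝ) : ℝ) * Complex.I) *
            Complex.exp (-(c : ℂ) * (‖a‖ : ℂ) ^ 2) ∂(volume) ∂ν := by
        apply integral_congr_ae
        filter_upwards with y
        rw [hinner y]
    _ = ∫ a : EuclideanSpace ℝ (Fin k), ∫ y,
          Complex.exp (-(2 * π * (inner ℝ (emb k m a b) y : ℝ) : ℝ) * Complex.I) *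
            Complex.exp (-(c : ℂ) * (‖a‖ : ℂ) ^ 2) ∂ν ∂(volume) :=
        (integral_integral_swap hint).symm
    _ = ∫ a : EuclideanSpace ℝ (Fin k),
          F ((WithLp.equiv 2 (Fin (k + m) → ℝ)).symm
              (Fin.addCases (fun i => a i) (fun i => b i))) *
            (Real.exp (-(4 * π ^ 2 * t * ‖a‖ ^ 2)) : ℂ) := by
        apply integral_congr_ae
        filter_upwards with a
        rw [hF, hexp_c, ← integral_mul_const]
        rfl
end

section
/- Let μ be a locally finite non-negative measure on ℝ^d satisfying μ(B(0,R)) ≲ R^N μ(B(0,1)) for all R ≥ 1 and some N > β + 2ε, and suppose x ∈ supp μ with μ(B(x, ρ e^{-τ})) ≤ ρ^{β+2ε} μ(B(x, e^{-τ})) for all ρ > 1 with log ρ ≤ τ. Then the normalized blow-up satisfies T_{x,e^{-τ}}[μ](B(0,R)) / μ(B(x,e^{-τ})) ≲ R^N for all R > e^{τ}, and combined with the doubling-type bound for R ≤ e^{τ}, the family {T_{x,e^{-τ}}[μ]/μ(B(x,e^{-τ}))}_τ is uniformly tempered. -/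
open MeasureTheory Metric Set Filter Topology

/-- Remark 2.7: if `μ` has polynomial growth `μ(B(x,R)) ≤ C₀ R^N μ(B(x,1))` for `R ≥ 1`
with `N > β + 2ε`, and the blow-up bound `μ(B(x, ρe^{-τ})) ≤ ρ^{β+2ε} μ(B(x,e^{-τ}))`
holds for all `ρ > 1` with `log ρ ≤ τ`, for every moment `τ` in a set `T` of moments,
then the normalized blow-ups `T_{x,e^{-τ}}[μ]/μ(B(x,e^{-τ}))`, `τ ∈ T`, are uniformly
tempered: `μ(B(x, R e^{-τ})) ≤ C R^N μ(B(x, e^{-τ}))` for all `R ≥ 1`, with `C`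
independent of `τ ∈ T`. -/
theorem blowups_uniformly_tempered
    (d : ℕ) (μ : Measure (EuclideanSpace ℝ (Fin d))) [IsLocallyFiniteMeasure μ]
    (x : EuclideanSpace ℝ (Fin d))
    (hx : ∀ r : ℝ, 0 < r → 0 < μ (closedBall x r))
    (β ε : ℝ) (hβ : 0 < β) (hε : 0 < ε)
    (N : ℝ) (hN : β + 2 * ε < N) (C₀ : ℝ) (hC₀ : 0 < C₀)
    (hgrowth : ∀ R : ℝ, 1 ≤ R →
      μ (closedBall x R) ≤ ENNReal.ofReal (C₀ * R ^ N) * μ (closedBall x 1))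
    (T : Set ℝ) (hT : T ⊆ Set.Ici (0:ℝ))
    (hblow : ∀ τ ∈ T, ∀ ρ : ℝ, 1 < ρ → Real.log ρ ≤ τ →
      μ (closedBall x (ρ * Real.exp (-τ)))
        ≤ ENNReal.ofReal (ρ ^ (β + 2 * ε)) * μ (closedBall x (Real.exp (-τ)))) :
    ∃ C : ℝ, 0 < C ∧ ∀ τ ∈ T, ∀ R : ℝ, 1 ≤ R →
      μ (closedBall x (R * Real.exp (-τ)))
        ≤ ENNReal.ofReal (C * R ^ N) * μ (closedBall x (Real.exp (-τ))) := by
  refine ⟨max C₀ 1, lt_of_lt_of_le one_pos (le_max_right _ _), ?_⟩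
  intro τ hτ R hR
  have hτ0 : 0 ≤ τ := hT hτ
  have hN0 : 0 < N := lt_trans (by positivity) hN
  have hR0 : 0 < R := lt_of_lt_of_le one_pos hR
  have hRN1 : (1:ℝ) ≤ R ^ N := Real.one_le_rpow hR hN0.le
  have hC1 : (1:ℝ) ≤ max C₀ 1 := le_max_right _ _
  rcases le_or_gt (Real.log R) τ with hcase | hcase
  · rcases eq_or_lt_of_le hR with hR1 | hR1
    · -- R = 1
      rw [← hR1, one_mul]
      calc μ (closedBall x (Real.exp (-τ)))
          = 1 * μ (closedBall x (Real.exp (-τ))) := (one_mul _).symm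
        _ ≤ ENNReal.ofReal (max C₀ 1 * (1:ℝ) ^ N) * μ (closedBall x (Real.exp (-τ))) := by
            gcongr
            rw [← ENNReal.ofReal_one]
            apply ENNReal.ofReal_le_ofReal
            rw [Real.one_rpow, mul_one]
            exact hC1
    · refine (hblow τ hτ R hR1 hcase).trans ?_
      gcongr
      calc R ^ (β + 2 * ε) ≤ R ^ N := Real.rpow_le_rpow_of_exponent_le hR hN.le
        _ ≤ max C₀ 1 * R ^ N := le_mul_of_one_le_left (by positivity) hC1
  · -- R > exp τ
    have hexpR : Real.exp τ < R := by
      calc Real.exp τ < Real.exp (Real.log R) := Real.exp_lt_exp.mpr hcase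
        _ = R := Real.exp_log hR0
    have h1 : (1:ℝ) ≤ R * Real.exp (-τ) := by
      rw [Real.exp_neg, ← div_eq_mul_inv, le_div_iff₀ (Real.exp_pos τ), one_mul]
      exact hexpR.le
    have h2 := hgrowth (R * Real.exp (-τ)) h1
    have h3 : μ (closedBall x 1)
        ≤ ENNReal.ofReal (Real.exp τ ^ (β + 2 * ε)) * μ (closedBall x (Real.exp (-τ))) := by
      rcases eq_or_lt_of_le hτ0 with hτe | hτpos
      · rw [← hτe]
        simp [Real.rpow_natCast]
      · have h1e : (1:ℝ) < Real.exp τ := by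
          rw [← Real.exp_zero]; exact Real.exp_lt_exp.mpr hτpos
        have := hblow τ hτ (Real.exp τ) h1e (le_of_eq (Real.log_exp τ))
        rwa [← Real.exp_add, add_neg_cancel, Real.exp_zero] at this
    calc μ (closedBall x (R * Real.exp (-τ)))
        ≤ ENNReal.ofReal (C₀ * (R * Real.exp (-τ)) ^ N) * μ (closedBall x 1) := h2
      _ ≤ ENNReal.ofReal (C₀ * (R * Real.exp (-τ)) ^ N) *
          (ENNReal.ofReal (Real.exp τ ^ (β + 2 * ε)) * μ (closedBall x (Real.exp (-τ)))) :=
            mul_le_mul_right h3 _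
      _ = ENNReal.ofReal (C₀ * (R * Real.exp (-τ)) ^ N * Real.exp τ ^ (β + 2 * ε)) *
            μ (closedBall x (Real.exp (-τ))) := by
          rw [← mul_assoc, ← ENNReal.ofReal_mul (by positivity)]
      _ ≤ ENNReal.ofReal (max C₀ 1 * R ^ N) * μ (closedBall x (Real.exp (-τ))) := by
          refine mul_le_mul_left (ENNReal.ofReal_le_ofReal ?_) _
          have key : C₀ * (R * Real.exp (-τ)) ^ N * Real.exp τ ^ (β + 2 * ε)
              = C₀ * R ^ N * Real.exp (τ * (β + 2 * ε - N)) := by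
            rw [Real.mul_rpow hR0.le (Real.exp_pos _).le, ← Real.exp_mul, ← Real.exp_mul,
              mul_assoc, mul_assoc, mul_assoc, ← Real.exp_add]
            ring_nf
          rw [key]
          have hle : Real.exp (τ * (β + 2 * ε - N)) ≤ 1 := by
            rw [← Real.exp_zero]
            exact Real.exp_le_exp.mpr (mul_nonpos_of_nonneg_of_nonpos hτ0 (by linarith))
          calc C₀ * R ^ N * Real.exp (τ * (β + 2 * ε - N))
              ≤ C₀ * R ^ N * 1 := by gcongr
            _ ≤ max C₀ 1 * R ^ N := by rw [mul_one]; gcongr; exact le_max_left _ _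
end
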